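/- Let m ≥ 3 and let the group P_{m,2} act on the space F^m of column vectors of length m over F by v^X = X⁻¹v for X ∈ P_{m,2}. Let v ∈ F^m be nonzero and let k be the largest index with v_k ≠ 0. If k ≤ 2 then v is fixed by P_{m,2} (its orbit is {v}); if k ≥ 3 then the orbit of v is exactly {w ∈ F^m : w_k = v_k, w_i = 0 for all i > k}, which has size q^{k−1}. In particular, every orbit of P_{m,2} on F^m has size either 1 or at least q². -/

import Mathlib

open Matrix

/-- A square matrix is (upper) unitriangular if all entries below the diagonal vanish
and all diagonal entries equal `1`. -/
def IsUnitriangular {n : ℕ} {F : Type*} [Field F] (A : Matrix (Fin n) (Fin n) F) : Prop :=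
  (∀ i j : Fin n, j < i → A i j = 0) ∧ ∀ i : Fin n, A i i = 1

theorem IsUnitriangular.mul {n : ℕ} {F : Type*} [Field F]
    {A B : Matrix (Fin n) (Fin n) F}
    (hA : IsUnitriangular A) (hB : IsUnitriangular B) : IsUnitriangular (A * B) := by
  constructor
  · intro i j hij
    rw [Matrix.mul_apply]
    apply Finset.sum_eq_zero
    intro m _
    rcases lt_or_ge m i with h | h
    · rw [hA.1 i m h, zero_mul]
    · rw [hB.1 m j (lt_of_lt_of_le hij h), mul_zero]
  · intro i
    rw [Matrix.mul_apply, Finset.sum_eq_single i]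
    · rw [hA.2, hB.2, one_mul]
    · intro m _ hm
      rcases lt_or_gt_of_ne hm with h | h
      · rw [hA.1 i m h, zero_mul]
      · rw [hB.1 m i h, mul_zero]
    · intro h
      exact absurd (Finset.mem_univ i) h

theorem IsUnitriangular.inv {n : ℕ} {F : Type*} [Field F] {A : GL (Fin n) F}
    (hA : IsUnitriangular (A : Matrix (Fin n) (Fin n) F)) :
    IsUnitriangular ((A⁻¹ : GL (Fin n) F) : Matrix (Fin n) (Fin n) F) := by
  letI := A.invertible
  have hBT : Matrix.BlockTriangular (A : Matrix (Fin n) (Fin n) F) id := fun i j h => hA.1 i j h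
  have hBTinv : Matrix.BlockTriangular ((A : Matrix (Fin n) (Fin n) F)⁻¹) id :=
    Matrix.blockTriangular_inv_of_blockTriangular hBT
  have hcoe : ((A⁻¹ : GL (Fin n) F) : Matrix (Fin n) (Fin n) F)
      = ((A : Matrix (Fin n) (Fin n) F)⁻¹) := Matrix.coe_units_inv A
  constructor
  · intro i j hij
    rw [hcoe]
    exact hBTinv hij
  · intro i
    have hmul : (A : Matrix (Fin n) (Fin n) F) * ((A⁻¹ : GL (Fin n) F) : Matrix (Fin n) (Fin n) F)
        = 1 := by
      rw [← Units.val_mul, mul_inv_cancel, Units.val_one]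
    have h1 : ((A : Matrix (Fin n) (Fin n) F)
        * ((A⁻¹ : GL (Fin n) F) : Matrix (Fin n) (Fin n) F)) i i = 1 := by
      rw [hmul, Matrix.one_apply_eq]
    rw [Matrix.mul_apply, Finset.sum_eq_single i] at h1
    · rw [hA.2 i, one_mul] at h1
      exact h1
    · intro m _ hm
      rcases lt_or_gt_of_ne hm with h | h
      · rw [hA.1 i m h, zero_mul]
      · rw [hcoe, hBTinv h, mul_zero]
    · intro h
      exact absurd (Finset.mem_univ i) h

/-- `UT F n` is the subgroup of `GL (Fin n) F` of upper unitriangular matrices,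
i.e. the group `U_n` of the paper. -/
def UT (F : Type*) [Field F] (n : ℕ) : Subgroup (GL (Fin n) F) where
  carrier := {A | IsUnitriangular (A : Matrix (Fin n) (Fin n) F)}
  one_mem' := by
    constructor
    · intro i j hij
      show (1 : GL (Fin n) F).val i j = 0
      rw [Units.val_one]
      exact Matrix.one_apply_ne hij.ne'
    · intro i
      show (1 : GL (Fin n) F).val i i = 1
      rw [Units.val_one]
      exact Matrix.one_apply_eq i
  mul_mem' := by
    intro A B hA hB
    show IsUnitriangular ((A * B : GL (Fin n) F) : Matrix (Fin n) (Fin n) F)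
    rw [Units.val_mul]
    exact IsUnitriangular.mul hA hB
  inv_mem' := by
    intro A hA
    exact IsUnitriangular.inv hA

/-- The full triviality of a column: combined with unitriangularity, vanishing above the
diagonal in a column means the column is a standard basis vector. -/
theorem trivial_col {n : ℕ} {F : Type*} [Field F] {A : Matrix (Fin n) (Fin n) F}
    (h1 : IsUnitriangular A) {c : Fin n}
    (h2 : ∀ k : Fin n, k < c → A k c = 0) {m : Fin n} (hm : m ≠ c) : A m c = 0 := by
  rcases lt_or_gt_of_ne hm with h | h
  · exact h2 m h
  · exact h1.1 m c h

/-- `Pcol F n i` is the subgroup `P_{n,i}` of `U_n` (inside `GL (Fin n) F`): unitriangular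
matrices whose `i`-th column (`1`-based) is trivial. -/
def Pcol (F : Type*) [Field F] (n : ℕ) (i : ℕ) : Subgroup (GL (Fin n) F) where
  carrier := {A | IsUnitriangular (A : Matrix (Fin n) (Fin n) F) ∧
    ∀ k c : Fin n, (c : ℕ) + 1 = i → k < c → (A : Matrix (Fin n) (Fin n) F) k c = 0}
  one_mem' := by
    refine ⟨(UT F n).one_mem, ?_⟩
    intro k c _ hk
    show (1 : GL (Fin n) F).val k c = 0
    rw [Units.val_one]
    exact Matrix.one_apply_ne hk.ne
  mul_mem' := by
    rintro A B ⟨hA1, hA2⟩ ⟨hB1, hB2⟩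
    refine ⟨(UT F n).mul_mem hA1 hB1, ?_⟩
    intro k c hc hk
    show ((A * B : GL (Fin n) F) : Matrix (Fin n) (Fin n) F) k c = 0
    rw [Units.val_mul, Matrix.mul_apply, Finset.sum_eq_single c]
    · rw [hA2 k c hc hk, zero_mul]
    · intro m _ hm
      rw [trivial_col hB1 (fun k' hk' => hB2 k' c hc hk') hm, mul_zero]
    · intro h
      exact absurd (Finset.mem_univ c) h
  inv_mem' := by
    rintro A ⟨hA1, hA2⟩
    refine ⟨IsUnitriangular.inv hA1, ?_⟩
    intro k c hc hk
    have hBA : ((A⁻¹ : GL (Fin n) F) : Matrix (Fin n) (Fin n) F)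
        * (A : Matrix (Fin n) (Fin n) F) = 1 := by
      rw [← Units.val_mul, inv_mul_cancel, Units.val_one]
    have h0 : (((A⁻¹ : GL (Fin n) F) : Matrix (Fin n) (Fin n) F)
        * (A : Matrix (Fin n) (Fin n) F)) k c = 0 := by
      rw [hBA]
      exact Matrix.one_apply_ne hk.ne
    rw [Matrix.mul_apply, Finset.sum_eq_single c] at h0
    · rw [hA1.2 c, mul_one] at h0
      exact h0
    · intro m _ hm
      rw [trivial_col hA1 (fun k' hk' => hA2 k' c hc hk') hm, mul_zero]
    · intro h
      exact absurd (Finset.mem_univ c) h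

/-- `Qcol F n i j` is the subgroup `Q_{n,i,j}` of `U_n` (inside `GL (Fin n) F`), for `1`-based
indices `i < j`: unitriangular matrices `A` with `A_{y,i} = 0` for `y < i` and `A_{x,j} = 0`
for `x < j`, `x ≠ i`. -/
def Qcol (F : Type*) [Field F] (n : ℕ) (i j : ℕ) : Subgroup (GL (Fin n) F) where
  carrier := {A | IsUnitriangular (A : Matrix (Fin n) (Fin n) F) ∧
    (∀ y c : Fin n, (c : ℕ) + 1 = i → (y : ℕ) + 1 < i →
      (A : Matrix (Fin n) (Fin n) F) y c = 0) ∧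
    (∀ x c : Fin n, (c : ℕ) + 1 = j → (x : ℕ) + 1 < j → (x : ℕ) + 1 ≠ i →
      (A : Matrix (Fin n) (Fin n) F) x c = 0)}
  one_mem' := by
    refine ⟨(UT F n).one_mem, ?_, ?_⟩
    · intro y c hc hy
      show (1 : GL (Fin n) F).val y c = 0
      rw [Units.val_one]
      refine Matrix.one_apply_ne fun h => ?_
      rw [h] at hy
      omega
    · intro x c hc hx _
      show (1 : GL (Fin n) F).val x c = 0
      rw [Units.val_one]
      refine Matrix.one_apply_ne fun h => ?_
      rw [h] at hx
      omega
  mul_mem' := by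
    rintro A B ⟨hA1, hA2, hA3⟩ ⟨hB1, hB2, hB3⟩
    have colI : ∀ (M : Matrix (Fin n) (Fin n) F), IsUnitriangular M →
        (∀ y c : Fin n, (c : ℕ) + 1 = i → (y : ℕ) + 1 < i → M y c = 0) →
        ∀ y c : Fin n, (c : ℕ) + 1 = i → y ≠ c → M y c = 0 := by
      intro M hM1 hM2 y c hc hy
      rcases lt_or_gt_of_ne hy with h | h
      · have h' : (y : ℕ) < (c : ℕ) := h
        exact hM2 y c hc (by omega)
      · exact hM1.1 y c h
    have colJ : ∀ (M : Matrix (Fin n) (Fin n) F), IsUnitriangular M →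
        (∀ x c : Fin n, (c : ℕ) + 1 = j → (x : ℕ) + 1 < j → (x : ℕ) + 1 ≠ i → M x c = 0) →
        ∀ x c : Fin n, (c : ℕ) + 1 = j → x ≠ c → (x : ℕ) + 1 ≠ i → M x c = 0 := by
      intro M hM1 hM3 x c hc hx hxi
      rcases lt_or_gt_of_ne hx with h | h
      · have h' : (x : ℕ) < (c : ℕ) := h
        exact hM3 x c hc (by omega) hxi
      · exact hM1.1 x c h
    refine ⟨(UT F n).mul_mem hA1 hB1, ?_, ?_⟩
    · intro y c hc hy
      show ((A * B : GL (Fin n) F) : Matrix (Fin n) (Fin n) F) y c = 0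
      rw [Units.val_mul, Matrix.mul_apply, Finset.sum_eq_single c]
      · rw [hA2 y c hc hy, zero_mul]
      · intro m _ hm
        rw [colI _ hB1 hB2 m c hc hm, mul_zero]
      · intro h
        exact absurd (Finset.mem_univ c) h
    · intro x c hc hx hxi
      show ((A * B : GL (Fin n) F) : Matrix (Fin n) (Fin n) F) x c = 0
      rw [Units.val_mul, Matrix.mul_apply]
      apply Finset.sum_eq_zero
      intro m _
      by_cases hmi : (m : ℕ) + 1 = i
      · have hxm : x ≠ m := fun h => hxi (by rw [h]; exact hmi)
        rw [colI _ hA1 hA2 x m hmi hxm, zero_mul]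
      · by_cases hmc : m = c
        · subst hmc
          rw [hA3 x m hc hx hxi, zero_mul]
        · rw [colJ _ hB1 hB3 m c hc hmc hmi, mul_zero]
  inv_mem' := by
    rintro A ⟨hA1, hA2, hA3⟩
    have colI : ∀ y c : Fin n, (c : ℕ) + 1 = i → y ≠ c →
        (A : Matrix (Fin n) (Fin n) F) y c = 0 := by
      intro y c hc hy
      rcases lt_or_gt_of_ne hy with h | h
      · have h' : (y : ℕ) < (c : ℕ) := h
        exact hA2 y c hc (by omega)
      · exact hA1.1 y c h
    have colJ : ∀ x c : Fin n, (c : ℕ) + 1 = j → x ≠ c → (x : ℕ) + 1 ≠ i →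
        (A : Matrix (Fin n) (Fin n) F) x c = 0 := by
      intro x c hc hx hxi
      rcases lt_or_gt_of_ne hx with h | h
      · have h' : (x : ℕ) < (c : ℕ) := h
        exact hA3 x c hc (by omega) hxi
      · exact hA1.1 x c h
    have hBA : ((A⁻¹ : GL (Fin n) F) : Matrix (Fin n) (Fin n) F)
        * (A : Matrix (Fin n) (Fin n) F) = 1 := by
      rw [← Units.val_mul, inv_mul_cancel, Units.val_one]
    have hBcolI : ∀ y c : Fin n, (c : ℕ) + 1 = i → y ≠ c →
        ((A⁻¹ : GL (Fin n) F) : Matrix (Fin n) (Fin n) F) y c = 0 := by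
      intro y c hc hy
      have h0 : (((A⁻¹ : GL (Fin n) F) : Matrix (Fin n) (Fin n) F)
          * (A : Matrix (Fin n) (Fin n) F)) y c = 0 := by
        rw [hBA]
        exact Matrix.one_apply_ne hy
      rw [Matrix.mul_apply, Finset.sum_eq_single c] at h0
      · rw [hA1.2 c, mul_one] at h0
        exact h0
      · intro m _ hm
        rw [colI m c hc hm, mul_zero]
      · intro h
        exact absurd (Finset.mem_univ c) h
    refine ⟨IsUnitriangular.inv hA1, ?_, ?_⟩
    · intro y c hc hy
      refine hBcolI y c hc fun h => ?_
      rw [h] at hy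
      omega
    · intro x c hc hx hxi
      have hxc : x ≠ c := fun h => by rw [h] at hx; omega
      have h0 : (((A⁻¹ : GL (Fin n) F) : Matrix (Fin n) (Fin n) F)
          * (A : Matrix (Fin n) (Fin n) F)) x c = 0 := by
        rw [hBA]
        exact Matrix.one_apply_ne hxc
      rw [Matrix.mul_apply, Finset.sum_eq_single c] at h0
      · rw [hA1.2 c, mul_one] at h0
        exact h0
      · intro m _ hm
        by_cases hmi : (m : ℕ) + 1 = i
        · have hxm : x ≠ m := fun h => hxi (by rw [h]; exact hmi)
          rw [hBcolI x m hmi hxm, zero_mul]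
        · rw [colJ m c hc hm hmi, mul_zero]
      · intro h
        exact absurd (Finset.mem_univ c) h

/-- `f : G → ℂ` is an irreducible (complex) character of `G` if it is the character of some
irreducible (= simple) finite-dimensional complex representation of `G`. -/
def IsIrrChar {G : Type} [Group G] (f : G → ℂ) : Prop :=
  ∃ V : FDRep ℂ G, CategoryTheory.Simple V ∧ f = fun g => FDRep.character V g

/-- `Nk G k` is the number `N_k(G)` of irreducible complex characters of `G` of degree `k`
(recall that the degree of a character `χ` is `χ(1)`). -/
noncomputable def Nk (G : Type) [Group G] (k : ℕ) : ℕ :=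
  Set.ncard {f : G → ℂ | IsIrrChar f ∧ f 1 = (k : ℂ)}

/-- A matrix is quasimonomial if it has at most one nonzero entry in every row and in
every column. -/
def Quasimonomial {s t : ℕ} {F : Type*} [Field F] (T : Matrix (Fin s) (Fin t) F) : Prop :=
  (∀ (i : Fin s) (j j' : Fin t), T i j ≠ 0 → T i j' ≠ 0 → j = j') ∧
  (∀ (i i' : Fin s) (j : Fin t), T i j ≠ 0 → T i' j ≠ 0 → i = i')

/-- The orbit of a column vector `v` under the action `v ^ X = X⁻¹ v` of `P_(m,2)`. -/
def Porbit (F : Type) [Field F] (m : ℕ) (v : Fin m → F) : Set (Fin m → F) :=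
  {w | ∃ X : Pcol F m 2,
    w = Matrix.mulVec (((X⁻¹ : Pcol F m 2) : GL (Fin m) F) : Matrix (Fin m) (Fin m) F) v}

/-!
Unitriangular matrices preserve the last nonzero entry of a vector together with the zeros
after it, so the orbit of `v` lies in the set of vectors that agree with `v` from its last
nonzero index `k` on. Every element of `P_{m,2}` has trivial first and second columns, hence
fixes `v` when `k ≤ 2`. When `k ≥ 3`, the column transvection `1 + c e_kᵀ`, with `c` supported
above row `k`, lies in `P_{m,2}` (its only nontrivial column is the `k`-th) and sends `v` to
`v + v_k c`; as `v_k ≠ 0`, this reaches every vector of that set.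
-/

section Unitriangular

variable {F : Type*} [Field F] {m : ℕ}

theorem IsUnitriangular.det_eq_one {A : Matrix (Fin m) (Fin m) F} (hA : IsUnitriangular A) :
    A.det = 1 := by
  rw [det_of_isUpperTriangular hA.1]
  exact Finset.prod_eq_one fun i _ => hA.2 i

theorem IsUnitriangular.apply_eq_one_apply_of_val_eq_zero {A : Matrix (Fin m) (Fin m) F}
    (hA : IsUnitriangular A) (i : Fin m) {j : Fin m} (hj : (j : ℕ) = 0) :
    A i j = (1 : Matrix (Fin m) (Fin m) F) i j := by
  rcases eq_or_ne i j with rfl | hij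
  · rw [hA.2, one_apply_eq]
  · rw [one_apply_ne hij, hA.1 _ _ (Fin.lt_def.2 (by have := Fin.val_ne_of_ne hij; omega))]

theorem mulVec_eq_self_of_col_eq_one_col {A : Matrix (Fin m) (Fin m) F} {u : Fin m → F}
    (hA : ∀ i j, u j ≠ 0 → A i j = (1 : Matrix (Fin m) (Fin m) F) i j) : A *ᵥ u = u := by
  conv_rhs => rw [← one_mulVec u]
  ext i
  simp only [mulVec, dotProduct]
  refine Finset.sum_congr rfl fun j _ => ?_
  by_cases hj : u j = 0
  · rw [hj, mul_zero, mul_zero]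
  · rw [hA i j hj]

theorem IsUnitriangular.mulVec_apply_self {A : Matrix (Fin m) (Fin m) F} (hA : IsUnitriangular A)
    {u : Fin m → F} {k : Fin m} (hu : ∀ l, k < l → u l = 0) : (A *ᵥ u) k = u k := by
  simp only [mulVec, dotProduct]
  rw [Finset.sum_eq_single k (fun j _ hj => ?_) (fun h => absurd (Finset.mem_univ k) h), hA.2,
    one_mul]
  rcases lt_or_gt_of_ne hj with h | h
  · rw [hA.1 k j h, zero_mul]
  · rw [hu j h, mul_zero]

theorem IsUnitriangular.mulVec_apply_of_lt {A : Matrix (Fin m) (Fin m) F} (hA : IsUnitriangular A)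
    {u : Fin m → F} {k : Fin m} (hu : ∀ l, k < l → u l = 0) {l : Fin m} (hl : k < l) :
    (A *ᵥ u) l = 0 := by
  simp only [mulVec, dotProduct]
  refine Finset.sum_eq_zero fun j _ => ?_
  rcases lt_or_ge j l with h | h
  · rw [hA.1 l j h, zero_mul]
  · rw [hu j (hl.trans_le h), mul_zero]

theorem IsUnitriangular.one_add_vecMulVec_single {c : Fin m → F} {k : Fin m}
    (hc : ∀ i, k ≤ i → c i = 0) : IsUnitriangular (1 + vecMulVec c (Pi.single k 1)) := by
  refine ⟨fun i j hji => ?_, fun i => ?_⟩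
  · rw [Matrix.add_apply, one_apply_ne hji.ne', vecMulVec_apply, zero_add]
    rcases eq_or_ne j k with rfl | hjk
    · rw [hc i hji.le, zero_mul]
    · rw [Pi.single_eq_of_ne hjk, mul_zero]
  · rw [Matrix.add_apply, one_apply_eq, vecMulVec_apply, add_eq_left]
    rcases eq_or_ne i k with rfl | hik
    · rw [hc i le_rfl, zero_mul]
    · rw [Pi.single_eq_of_ne hik, mul_zero]

theorem one_add_vecMulVec_single_mulVec (c u : Fin m → F) (k : Fin m) :
    (1 + vecMulVec c (Pi.single k 1)) *ᵥ u = u + u k • c := by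
  rw [add_mulVec, one_mulVec, vecMulVec_mulVec, single_one_dotProduct, op_smul_eq_smul]

noncomputable def IsUnitriangular.toGL {A : Matrix (Fin m) (Fin m) F} (hA : IsUnitriangular A) :
    GL (Fin m) F :=
  GeneralLinearGroup.mkOfDetNeZero A (by rw [hA.det_eq_one]; exact one_ne_zero)

@[simp]
theorem IsUnitriangular.coe_toGL {A : Matrix (Fin m) (Fin m) F} (hA : IsUnitriangular A) :
    (hA.toGL : Matrix (Fin m) (Fin m) F) = A :=
  rfl

end Unitriangular

/-- With `0`-based `k`, this is the paper's set for index `k + 1`; it has `q ^ k` elements. -/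
def fixedTail {F : Type*} [Zero F] {m : ℕ} (k : Fin m) (a : F) : Set (Fin m → F) :=
  {w | w k = a ∧ ∀ l, k < l → w l = 0}

theorem ncard_fixedTail {F : Type*} [Zero F] [Fintype F] {m : ℕ} (k : Fin m)
    (a : F) : (fixedTail k a).ncard = Fintype.card F ^ (k : ℕ) := by
  classical
  have : fixedTail k a = ↑(Fintype.piFinset fun l : Fin m =>
      if l < k then Finset.univ else {if l = k then a else 0}) := by
    ext w
    simp only [fixedTail, Set.mem_ofPred_eq, Fintype.coe_piFinset, Set.mem_univ_pi]
    refine ⟨fun ⟨hwk, hw⟩ l => ?_, fun hw => ⟨?_, fun l hl => ?_⟩⟩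
    · rcases lt_trichotomy l k with h | rfl | h
      · simp [h]
      · simp [hwk]
      · simp [h.not_gt, h.ne', hw l h]
    · simpa using hw k
    · simpa [hl.not_gt, hl.ne'] using hw l
  rw [this, Set.ncard_coe_finset, Fintype.card_piFinset]
  simp only [apply_ite Finset.card, Finset.card_univ, Finset.card_singleton]
  rw [← Finset.prod_filter, Finset.prod_const, Finset.filter_gt_eq_Iio, Fin.card_Iio]

theorem exists_max_ne_zero {ι α : Type*} [Fintype ι] [LinearOrder ι] [Zero α] {u : ι → α} {l : ι}
    (hl : u l ≠ 0) : ∃ k, l ≤ k ∧ u k ≠ 0 ∧ ∀ j, k < j → u j = 0 := by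
  classical
  obtain ⟨k, hk, hmax⟩ := (Finset.univ.filter (u · ≠ 0)).exists_max_image id ⟨l, by simpa⟩
  refine ⟨k, hmax l (by simpa), by simpa using hk, fun j hj => ?_⟩
  by_contra h
  exact (hmax j (by simpa)).not_gt hj

section Porbit

variable {F : Type} [Field F] {m : ℕ}

theorem apply_eq_one_apply_of_mem_Pcol {A : GL (Fin m) F} {i : ℕ} (hA : A ∈ Pcol F m i)
    (r : Fin m) {c : Fin m} (hc : (c : ℕ) + 1 = i) :
    (A : Matrix (Fin m) (Fin m) F) r c = (1 : Matrix (Fin m) (Fin m) F) r c := by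
  rcases eq_or_ne r c with rfl | hrc
  · rw [hA.1.2, one_apply_eq]
  · rw [one_apply_ne hrc, trivial_col hA.1 (fun k hk => hA.2 k c hc hk) hrc]

theorem mem_Porbit_iff {u w : Fin m → F} :
    w ∈ Porbit F m u ↔ ∃ A ∈ Pcol F m 2, (A : Matrix (Fin m) (Fin m) F) *ᵥ u = w := by
  constructor
  · rintro ⟨X, rfl⟩
    exact ⟨_, (X⁻¹).2, rfl⟩
  · rintro ⟨A, hA, rfl⟩
    exact ⟨⟨A, hA⟩⁻¹, by rw [inv_inv]⟩

theorem mem_Porbit_self (u : Fin m → F) : u ∈ Porbit F m u :=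
  mem_Porbit_iff.2 ⟨1, one_mem _, by simp⟩

theorem Porbit_eq_singleton {u : Fin m → F} (hu : ∀ l : Fin m, 1 < (l : ℕ) → u l = 0) :
    Porbit F m u = {u} := by
  refine Set.eq_singleton_iff_unique_mem.2 ⟨mem_Porbit_self u, fun w hw => ?_⟩
  obtain ⟨A, hA, rfl⟩ := mem_Porbit_iff.1 hw
  refine mulVec_eq_self_of_col_eq_one_col fun i j hj => ?_
  rcases Nat.le_one_iff_eq_zero_or_eq_one.1 (not_lt.1 (mt (hu j) hj)) with h | h
  · exact hA.1.apply_eq_one_apply_of_val_eq_zero i h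
  · exact apply_eq_one_apply_of_mem_Pcol hA i (by omega)

theorem Porbit_subset_fixedTail {u : Fin m → F} {k : Fin m} (hu : ∀ l, k < l → u l = 0) :
    Porbit F m u ⊆ fixedTail k (u k) := by
  intro w hw
  obtain ⟨A, hA, rfl⟩ := mem_Porbit_iff.1 hw
  exact ⟨hA.1.mulVec_apply_self hu, fun l => hA.1.mulVec_apply_of_lt hu⟩

theorem fixedTail_subset_Porbit {u : Fin m → F} {k : Fin m} (hk : u k ≠ 0) (hk2 : 2 ≤ (k : ℕ))
    (hu : ∀ l, k < l → u l = 0) : fixedTail k (u k) ⊆ Porbit F m u := by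
  rintro w ⟨hwk, hw⟩
  set c : Fin m → F := fun i => if i < k then (w i - u i) / u k else 0
  have hc : ∀ i, k ≤ i → c i = 0 := fun i hi => if_neg hi.not_gt
  have hT := IsUnitriangular.one_add_vecMulVec_single hc
  refine mem_Porbit_iff.2 ⟨hT.toGL, ⟨hT, fun r j hj hrj => ?_⟩, ?_⟩
  · have hjk : j ≠ k := fun h => by rw [h] at hj; omega
    simp [one_apply_ne hrj.ne, vecMulVec_apply, Pi.single_eq_of_ne hjk]
  · rw [hT.coe_toGL, one_add_vecMulVec_single_mulVec]
    ext i
    rcases lt_trichotomy i k with h | rfl | h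
    · simp [c, h, mul_div_cancel₀ _ hk]
    · simp [c, hwk]
    · simp [c, h.not_gt, hu i h, hw i h]

theorem Porbit_eq_fixedTail {u : Fin m → F} {k : Fin m} (hk : u k ≠ 0) (hk2 : 2 ≤ (k : ℕ))
    (hu : ∀ l, k < l → u l = 0) : Porbit F m u = fixedTail k (u k) :=
  (Porbit_subset_fixedTail hu).antisymm (fixedTail_subset_Porbit hk hk2 hu)

theorem ncard_Porbit_eq_one_or_sq_le [Fintype F] (u : Fin m → F) :
    (Porbit F m u).ncard = 1 ∨ Fintype.card F ^ 2 ≤ (Porbit F m u).ncard := by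
  by_cases hu : ∀ l : Fin m, 1 < (l : ℕ) → u l = 0
  · left
    rw [Porbit_eq_singleton hu, Set.ncard_singleton]
  · obtain ⟨l, hl, hul⟩ := not_forall₂.1 hu
    obtain ⟨k, hlk, hk, hu⟩ := exists_max_ne_zero hul
    have hk2 : 2 ≤ (k : ℕ) := by have := Fin.le_def.1 hlk; omega
    right
    rw [Porbit_eq_fixedTail hk hk2 hu, ncard_fixedTail]
    exact Nat.pow_le_pow_right Fintype.card_pos hk2

end Porbit

theorem stmt_14_general (q : ℕ)
    (F : Type) [Field F] [Fintype F] (hF : Fintype.card F = q)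
    (m : ℕ) (v : Fin m → F)
    (k : Fin m) (hk : v k ≠ 0) (hkmax : ∀ l : Fin m, k < l → v l = 0) :
    ((k : ℕ) + 1 ≤ 2 → Porbit F m v = {v}) ∧
    (3 ≤ (k : ℕ) + 1 →
      Porbit F m v = {w : Fin m → F | w k = v k ∧ ∀ l : Fin m, k < l → w l = 0} ∧
      Set.ncard (Porbit F m v) = q ^ (k : ℕ)) ∧
    (∀ u : Fin m → F, Set.ncard (Porbit F m u) = 1 ∨ q ^ 2 ≤ Set.ncard (Porbit F m u)) := by
  subst hF
  refine ⟨fun hk1 => Porbit_eq_singleton fun l hl => hkmax l (Fin.lt_def.2 (by omega)),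
    fun hk2 => ?_, ncard_Porbit_eq_one_or_sq_le⟩
  rw [Porbit_eq_fixedTail hk (by omega) hkmax]
  exact ⟨rfl, ncard_fixedTail k (v k)⟩

theorem stmt_14 (p q : ℕ) (hp : p.Prime) (hpq : ∃ m : ℕ, 0 < m ∧ q = p ^ m)
    (F : Type) [Field F] [Fintype F] (hF : Fintype.card F = q)
    (m : ℕ) (hm : 3 ≤ m) (v : Fin m → F) (hv : v ≠ 0)
    (k : Fin m) (hk : v k ≠ 0) (hkmax : ∀ l : Fin m, k < l → v l = 0) :
    ((k : ℕ) + 1 ≤ 2 → Porbit F m v = {v}) ∧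
    (3 ≤ (k : ℕ) + 1 →
      Porbit F m v = {w : Fin m → F | w k = v k ∧ ∀ l : Fin m, k < l → w l = 0} ∧
      Set.ncard (Porbit F m v) = q ^ (k : ℕ)) ∧
    (∀ u : Fin m → F, Set.ncard (Porbit F m u) = 1 ∨ q ^ 2 ≤ Set.ncard (Porbit F m u)) :=
  stmt_14_general q F hF m v k hk hkmax
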